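/- Let R be a ring and M an R-module of finite length. Let σ be a simple R-module such that: (a) σ occurs with multiplicity exactly one among the composition factors of M; (b) every simple quotient of M is isomorphic to σ; (c) σ is isomorphic to a submodule of M and to a quotient of M. Then M is simple (hence M ≅ σ). -/

import Mathlib

/-!
If `π : M → σ` is not injective, its kernel `K` is a nonzero maximal submodule, and `σ` also
occurs as a composition factor of `K`: either the embedded copy `N` of `σ` lies in `K`, or `N` is a
complement of `K`, and then for a maximal `P < K` the factor `K / P ≅ M / (P ⊔ N)` is a simple
quotient of `M`, hence isomorphic to `σ`. A composition series passing through such a factor of `K`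
and through `K < ⊤` has two factors isomorphic to `σ`, which contradicts multiplicity one by
Jordan–Hölder. Hence `π` is an isomorphism.
-/

open scoped SetRel

namespace RelSeries

variable {α : Type*} {r : SetRel α α}

def HasStep (p : RelSeries r) (a b : α) : Prop :=
  ∃ i : Fin p.length, p i.castSucc = a ∧ p i.succ = b

lemma hasStep_last_snoc (p : RelSeries r) (b : α) (h : p.last ~[r] b) :
    (p.snoc b h).HasStep p.last b :=
  ⟨Fin.last p.length, snoc_castSucc p b h _, last_snoc' p b h⟩

lemma HasStep.snoc {p : RelSeries r} {a b : α} (hp : p.HasStep a b) (c : α) (h : p.last ~[r] c) :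
    (p.snoc c h).HasStep a b := by
  obtain ⟨i, hi, hi'⟩ := hp
  exact ⟨i.castSucc, (snoc_castSucc p c h _).trans hi, (snoc_castSucc p c h i.succ).trans hi'⟩

lemma HasStep.smash {p : RelSeries r} {a b : α} (hp : p.HasStep a b) (q : RelSeries r)
    (h : p.last = q.head) : (p.smash q h).HasStep a b := by
  obtain ⟨i, hi, hi'⟩ := hp
  exact ⟨Fin.castAdd q.length i, (smash_castAdd h i).trans hi, (smash_succ_castAdd h i).trans hi'⟩

end RelSeries

namespace CompositionSeries

variable {X : Type*} [Lattice X] [IsModularLattice X] [WellFoundedLT X] [WellFoundedGT X]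

theorem exists_head_eq_last_eq_of_le {x y : X} (h : x ≤ y) :
    ∃ t : CompositionSeries X, t.head = x ∧ t.last = y := by
  obtain ⟨f, f0, n, fn, hf⟩ := exists_covBy_seq_of_wellFoundedLT_wellFoundedGT_of_le h
  exact ⟨⟨n, fun i ↦ f i, fun i ↦ hf i i.2⟩, f0, fn⟩

theorem exists_hasStep_hasStep {x a b c d y : X} (hxa : x ≤ a) (hab : a ⋖ b) (hbc : b ≤ c)
    (hcd : c ⋖ d) (hdy : d ≤ y) :
    ∃ t : CompositionSeries X, t.head = x ∧ t.last = y ∧ t.HasStep a b ∧ t.HasStep c d := by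
  obtain ⟨t₁, ht₁, ht₁'⟩ := exists_head_eq_last_eq_of_le hxa
  obtain ⟨t₂, ht₂, ht₂'⟩ := exists_head_eq_last_eq_of_le hbc
  obtain ⟨t₃, ht₃, ht₃'⟩ := exists_head_eq_last_eq_of_le hdy
  let u := (t₁.snoc b (by rwa [ht₁'])).smash t₂ (by simp [ht₂])
  have hu : u.last = c := by simp [u, ht₂']
  refine ⟨(u.snoc d (by rwa [hu])).smash t₃ (by simp [ht₃]), by simp [u, ht₁], by simp [ht₃'],
    ((ht₁' ▸ RelSeries.hasStep_last_snoc t₁ b _).smash _ _).snoc _ _ |>.smash _ _,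
    (hu ▸ RelSeries.hasStep_last_snoc u d _).smash _ _⟩

end CompositionSeries

section Complement

variable {X : Type*} [Lattice X] [BoundedOrder X] [IsModularLattice X] {N K P : X}

theorem IsCompl.sup_inf_right_eq_of_le (h : IsCompl N K) (hPK : P ≤ K) : (P ⊔ N) ⊓ K = P := by
  rw [sup_inf_assoc_of_le N hPK, h.inf_eq_bot, sup_bot_eq]

theorem IsCompl.sup_covBy_top_of_covBy (h : IsCompl N K) (hPK : P ⋖ K) : P ⊔ N ⋖ ⊤ := by
  have := covBy_sup_of_inf_covBy_right ((h.sup_inf_right_eq_of_le hPK.le).symm ▸ hPK)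
  rwa [(h.codisjoint.mono_left le_sup_right).eq_top] at this

theorem IsCompl.iso_of_covBy (h : IsCompl N K) (hPK : P ⋖ K) :
    JordanHolderLattice.Iso (P ⊔ N, ⊤) (P, K) :=
  JordanHolderLattice.second_iso_of_eq (h.sup_covBy_top_of_covBy hPK)
    (h.codisjoint.mono_left le_sup_right).eq_top
    (h.sup_inf_right_eq_of_le hPK.le)

end Complement

namespace Submodule

variable {R M : Type*} [Ring R] [AddCommGroup M] [Module R M]

abbrev Subquotient (A B : Submodule R M) : Type _ := ↥B ⧸ A.comap B.subtype

noncomputable def subquotientBotEquiv (B : Submodule R M) : Subquotient ⊥ B ≃ₗ[R] B :=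
  quotEquivOfEqBot _ (by simp)

noncomputable def subquotientTopEquiv (A : Submodule R M) : Subquotient A ⊤ ≃ₗ[R] M ⧸ A :=
  Quotient.equiv _ _ topEquiv (by ext; simp)

variable {σ : Type*} [AddCommGroup σ] [Module R σ]

theorem exists_covBy_le_subquotient_equiv [IsNoetherian R M] {K N : Submodule R M}
    (hK : IsCoatom K) (hK₀ : K ≠ ⊥) (hN : IsAtom N) (eN : N ≃ₗ[R] σ)
    (hquot : ∀ P : Submodule R M, IsSimpleModule R (M ⧸ P) → Nonempty ((M ⧸ P) ≃ₗ[R] σ)) :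
    ∃ A B : Submodule R M, A ⋖ B ∧ B ≤ K ∧ Nonempty (Subquotient A B ≃ₗ[R] σ) := by
  by_cases hNK : N ≤ K
  · exact ⟨⊥, N, hN.bot_covBy, hNK, ⟨subquotientBotEquiv N ≪≫ₗ eN⟩⟩
  have hc : IsCompl N K :=
    ⟨hN.not_le_iff_disjoint.mp hNK, (hK.not_le_iff_codisjoint.mp hNK).symm⟩
  obtain ⟨P, -, hPK⟩ := exists_le_covBy_of_lt (bot_lt_iff_ne_bot.mpr hK₀)
  obtain ⟨e⟩ := hquot (P ⊔ N)
    (isSimpleModule_iff_isCoatom.mpr (covBy_top_iff.mp (hc.sup_covBy_top_of_covBy hPK)))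
  exact ⟨P, K, hPK, le_rfl,
    ⟨(hc.iso_of_covBy hPK).linearEquiv.symm ≪≫ₗ subquotientTopEquiv _ ≪≫ₗ e⟩⟩

end Submodule

namespace CompositionSeries

variable {R M : Type*} [Ring R] [AddCommGroup M] [Module R M]

theorem Equivalent.card_subquotient_equiv_eq {s t : CompositionSeries (Submodule R M)}
    (h : s.Equivalent t) (σ : Type*) [AddCommGroup σ] [Module R σ] :
    Nat.card {i : Fin s.length //
      Nonempty (Submodule.Subquotient (s i.castSucc) (s i.succ) ≃ₗ[R] σ)} =
    Nat.card {i : Fin t.length //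
      Nonempty (Submodule.Subquotient (t i.castSucc) (t i.succ) ≃ₗ[R] σ)} := by
  obtain ⟨f, hf⟩ := h
  exact Nat.card_congr <| f.subtypeEquiv fun i ↦
    ⟨fun ⟨e⟩ ↦ ⟨(hf i).linearEquiv.symm ≪≫ₗ e⟩, fun ⟨e⟩ ↦ ⟨(hf i).linearEquiv ≪≫ₗ e⟩⟩

theorem one_lt_card_subquotient_equiv {σ : Type*} [AddCommGroup σ] [Module R σ]
    {t : CompositionSeries (Submodule R M)} {a b c d : Submodule R M}
    (hab : t.HasStep a b) (hcd : t.HasStep c d) (hbc : b ≤ c) (hcd_lt : c < d)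
    (eab : Nonempty (Submodule.Subquotient a b ≃ₗ[R] σ))
    (ecd : Nonempty (Submodule.Subquotient c d ≃ₗ[R] σ)) :
    1 < Nat.card {i : Fin t.length //
      Nonempty (Submodule.Subquotient (t i.castSucc) (t i.succ) ≃ₗ[R] σ)} := by
  obtain ⟨i, rfl, rfl⟩ := hab
  obtain ⟨j, rfl, rfl⟩ := hcd
  have hij : i ≠ j := by
    rintro rfl
    exact (hbc.trans_lt hcd_lt).ne rfl
  exact Finite.one_lt_card_iff_nontrivial.mpr
    ⟨⟨i, eab⟩, ⟨j, ecd⟩, fun h ↦ hij (congrArg Subtype.val h)⟩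

end CompositionSeries

/-- Multiplicity-one argument underlying Theorem 2.13(ii): a finite length module
with a simple module σ occurring exactly once among its composition factors,
all of whose simple quotients are isomorphic to σ, and containing σ both as a
submodule and as a quotient, is itself simple and isomorphic to σ. -/
theorem stmt16 (R M σ : Type*) [Ring R] [AddCommGroup M] [Module R M]
    [AddCommGroup σ] [Module R σ] [IsSimpleModule R σ]
    (s : CompositionSeries (Submodule R M))
    (hhead : s.head = ⊥) (hlast : s.last = ⊤)
    (hmult : Nat.card {i : Fin s.length //
      Nonempty ((↥(s.toFun i.succ) ⧸
        Submodule.comap (s.toFun i.succ).subtype (s.toFun i.castSucc)) ≃ₗ[R] σ)} = 1)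
    (hquot : ∀ P : Submodule R M, IsSimpleModule R (M ⧸ P) → Nonempty ((M ⧸ P) ≃ₗ[R] σ))
    (hsub : ∃ ι : σ →ₗ[R] M, Function.Injective ι)
    (hsurj : ∃ π : M →ₗ[R] σ, Function.Surjective π) :
    IsSimpleModule R M ∧ Nonempty (M ≃ₗ[R] σ) := by
  obtain ⟨ι, hι⟩ := hsub
  obtain ⟨π, hπ⟩ := hsurj
  obtain ⟨_, _⟩ := isFiniteLength_iff_isNoetherian_isArtinian.mp
    (isFiniteLength_of_exists_compositionSeries ⟨s, hhead, hlast⟩)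
  suffices hK₀ : LinearMap.ker π = ⊥ by
    let e := LinearEquiv.ofBijective π ⟨LinearMap.ker_eq_bot.mp hK₀, hπ⟩
    exact ⟨IsSimpleModule.congr e, ⟨e⟩⟩
  by_contra hK₀
  let eK := π.quotKerEquivOfSurjective hπ
  let eN := (LinearEquiv.ofInjective ι hι).symm
  have hK : IsCoatom (LinearMap.ker π) := isSimpleModule_iff_isCoatom.mp (.congr eK)
  obtain ⟨A, B, hAB, hBK, hσ⟩ := Submodule.exists_covBy_le_subquotient_equiv hK hK₀
    (isSimpleModule_iff_isAtom.mp (.congr eN)) eN hquot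
  obtain ⟨t, ht₀, ht₁, htAB, htK⟩ :=
    CompositionSeries.exists_hasStep_hasStep bot_le hAB hBK (covBy_top_iff.mpr hK) le_rfl
  have hσt := (CompositionSeries.jordan_holder t s (ht₀.trans hhead.symm)
    (ht₁.trans hlast.symm)).card_subquotient_equiv_eq σ
  exact (CompositionSeries.one_lt_card_subquotient_equiv htAB htK hBK hK.lt_top hσ
    ⟨Submodule.subquotientTopEquiv _ ≪≫ₗ eK⟩).ne' (hσt.trans hmult)
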